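/- Let m ≥ 13 and n ≥ 13 be integers with m ≡ 2 (mod 3) and n ≡ 2 (mod 3). Then γ_sR(Cₘ ∨ Cₙ) = 2. -/

import Mathlib

open Finset SimpleGraph
open scoped Classical

/-- The sum of `f` over the closed neighborhood of `v` in `G`. -/
noncomputable def closedNbrSum {V : Type*} [Fintype V] (G : SimpleGraph V)
    (f : V → ℤ) (v : V) : ℤ :=
  ∑ u ∈ Finset.univ.filter (fun u => u = v ∨ G.Adj v u), f u

/-- `f` is a signed Roman dominating function on `G`. -/
def IsSRDF {V : Type*} [Fintype V] (G : SimpleGraph V) (f : V → ℤ) : Prop :=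
  (∀ v, f v = -1 ∨ f v = 1 ∨ f v = 2) ∧
  (∀ v, 1 ≤ closedNbrSum G f v) ∧
  (∀ v, f v = -1 → ∃ u, G.Adj v u ∧ f u = 2)

/-- The signed Roman domination number of `G`. -/
noncomputable def gammaSR {V : Type*} [Fintype V] (G : SimpleGraph V) : ℤ :=
  sInf {w : ℤ | ∃ f, IsSRDF G f ∧ w = ∑ v, f v}

/-- The join of two graphs. -/
def graphJoin {V W : Type*} (G : SimpleGraph V) (H : SimpleGraph W) :
    SimpleGraph (V ⊕ W) where
  Adj x y :=
    match x, y with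
    | .inl a, .inl b => G.Adj a b
    | .inr a, .inr b => H.Adj a b
    | _, _ => True
  symm := by
    constructor
    rintro (a | a) (b | b) h <;> simp_all <;> exact h.symm
  loopless := by
    constructor
    rintro (a | a) h <;> simp_all
/-!
Summing the closed-neighbourhood condition over the vertices of one cycle of `Cₘ ∨ Cₙ` gives
`m ≤ 3 x + m y` and `n ≤ 3 y + n x`, where `x` and `y` are the weights on the two cycles; for
`m, n ≥ 4` this forces `x + y ≥ 2`. Conversely, the pattern `2, -1, -1, 2, -1, -1, …, 2, -1`
along each cycle (possible as `m ≡ n ≡ 2 mod 3`) has weight `1` on each cycle and closed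
neighbourhood sums `≥ 0` within it, and every `-1` sees the `2`s of the other cycle.
-/

section ClosedNbrSum

variable {V : Type*} [Fintype V] (G : SimpleGraph V) [DecidableRel G.Adj] (f : V → ℤ)

lemma closedNbrSum_eq_add_sum_neighborFinset (v : V) :
    closedNbrSum G f v = f v + ∑ u ∈ G.neighborFinset v, f u := by
  have : closedNbrSum G f v = ∑ u ∈ insert v (G.neighborFinset v), f u := by
    unfold closedNbrSum
    congr 1
    ext u
    simp
  rw [this, sum_insert (by simp)]

lemma sum_closedNbrSum :
    ∑ v, closedNbrSum G f v = ∑ u, (G.degree u + 1) * f u := by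
  simp only [closedNbrSum_eq_add_sum_neighborFinset, sum_add_distrib, add_mul, one_mul,
    add_comm (∑ u, f u)]
  congr 1
  rw [sum_comm' (t' := univ) (s' := fun u => G.neighborFinset u) (by simp [adj_comm])]
  simp

variable {G} in
lemma SimpleGraph.IsRegularOfDegree.sum_closedNbrSum {d : ℕ} (hG : G.IsRegularOfDegree d) :
    ∑ v, closedNbrSum G f v = (d + 1) * ∑ v, f v := by
  simp [_root_.sum_closedNbrSum, hG.degree_eq, mul_sum]

end ClosedNbrSum

section Join

variable {V W : Type*} [Fintype V] [Fintype W] (G : SimpleGraph V) (H : SimpleGraph W)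

lemma closedNbrSum_graphJoin_inl (f : V ⊕ W → ℤ) (a : V) :
    closedNbrSum (graphJoin G H) f (.inl a)
      = closedNbrSum G (f ∘ .inl) a + ∑ b, f (.inr b) := by
  rw [closedNbrSum, closedNbrSum, sum_filter, sum_filter, Fintype.sum_sum_type]
  simp [graphJoin]

lemma closedNbrSum_graphJoin_inr (f : V ⊕ W → ℤ) (b : W) :
    closedNbrSum (graphJoin G H) f (.inr b)
      = closedNbrSum H (f ∘ .inr) b + ∑ a, f (.inl a) := by
  rw [closedNbrSum, closedNbrSum, sum_filter, sum_filter, Fintype.sum_sum_type]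
  simp [graphJoin, add_comm]

lemma sum_closedNbrSum_graphJoin_inl [DecidableRel G.Adj] {d : ℕ} (hG : G.IsRegularOfDegree d)
    (f : V ⊕ W → ℤ) :
    ∑ a, closedNbrSum (graphJoin G H) f (.inl a)
      = (d + 1) * ∑ a, f (.inl a) + Fintype.card V * ∑ b, f (.inr b) := by
  simp [closedNbrSum_graphJoin_inl, sum_add_distrib, hG.sum_closedNbrSum (f ∘ .inl)]

lemma sum_closedNbrSum_graphJoin_inr [DecidableRel H.Adj] {e : ℕ} (hH : H.IsRegularOfDegree e)
    (f : V ⊕ W → ℤ) :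
    ∑ b, closedNbrSum (graphJoin G H) f (.inr b)
      = (e + 1) * ∑ b, f (.inr b) + Fintype.card W * ∑ a, f (.inl a) := by
  simp [closedNbrSum_graphJoin_inr, sum_add_distrib, hH.sum_closedNbrSum (f ∘ .inr)]

theorem two_le_sum_of_one_le_closedNbrSum_graphJoin [DecidableRel G.Adj] [DecidableRel H.Adj]
    {d e : ℕ} (hG : G.IsRegularOfDegree d) (hH : H.IsRegularOfDegree e)
    (hd : d + 1 < Fintype.card V) (he : e + 1 < Fintype.card W) {f : V ⊕ W → ℤ}
    (hf : ∀ v, 1 ≤ closedNbrSum (graphJoin G H) f v) :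
    2 ≤ ∑ v, f v := by
  have hV :
      (Fintype.card V : ℤ) ≤ (d + 1) * ∑ a, f (.inl a) + Fintype.card V * ∑ b, f (.inr b) :=
    calc (Fintype.card V : ℤ) = ∑ _a : V, 1 := by simp
      _ ≤ _ := sum_le_sum fun a _ => hf (.inl a)
      _ = _ := sum_closedNbrSum_graphJoin_inl G H hG f
  have hW :
      (Fintype.card W : ℤ) ≤ (e + 1) * ∑ b, f (.inr b) + Fintype.card W * ∑ a, f (.inl a) :=
    calc (Fintype.card W : ℤ) = ∑ _b : W, 1 := by simp
      _ ≤ _ := sum_le_sum fun b _ => hf (.inr b)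
      _ = _ := sum_closedNbrSum_graphJoin_inr G H hH f
  rw [Fintype.sum_sum_type]
  set x := ∑ a, f (.inl a)
  set y := ∑ b, f (.inr b)
  have hd' : (d : ℤ) + 1 < Fintype.card V := by exact_mod_cast hd
  have he' : (e : ℤ) + 1 < Fintype.card W := by exact_mod_cast he
  -- if `y ≤ 0` then `|V| y ≤ (d + 1) y`, so `(d + 1) (x + y) ≥ |V| > d + 1`; same for `x`
  rcases le_or_gt y 0 with hy | hy
  · nlinarith
  rcases le_or_gt x 0 with hx | hx
  · nlinarith
  omega

end Join

lemma cycleGraph_isRegularOfDegree_two {m : ℕ} (hm : 3 ≤ m) :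
    (cycleGraph m).IsRegularOfDegree 2 := by
  obtain ⟨k, rfl⟩ := Nat.exists_eq_add_of_le' hm
  intro v
  convert cycleGraph_degree_three_le

lemma closedNbrSum_cycleGraph {m : ℕ} [NeZero m] (hm : 3 ≤ m) (g : Fin m → ℤ) (a : Fin m) :
    closedNbrSum (cycleGraph m) g a = g (a - 1) + g a + g (a + 1) := by
  obtain ⟨k, rfl⟩ : ∃ k, m = k + 1 + 2 := ⟨m - 3, by omega⟩
  have hne : a - 1 ≠ a + 1 := by
    have := a.isLt
    simp only [ne_eq, Fin.ext_iff, Fin.val_add_one, Fin.coe_sub_one, Fin.val_last, Fin.val_zero]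
    split_ifs <;> omega
  rw [closedNbrSum_eq_add_sum_neighborFinset, cycleGraph_neighborFinset, sum_pair hne]
  ring

def periodicPattern {m : ℕ} (a : Fin m) : ℤ := if a.val % 3 = 0 then 2 else -1

lemma periodicPattern_cases {m : ℕ} (a : Fin m) :
    periodicPattern a = -1 ∨ periodicPattern a = 1 ∨ periodicPattern a = 2 := by
  unfold periodicPattern; split_ifs <;> simp

lemma sum_periodicPattern {m : ℕ} (hm3 : m % 3 = 2) : ∑ a : Fin m, periodicPattern a = 1 := by
  obtain ⟨k, rfl⟩ : ∃ k, m = 3 * k + 2 := ⟨m / 3, by omega⟩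
  clear hm3
  unfold periodicPattern
  rw [Fin.sum_univ_eq_sum_range (fun i => if i % 3 = 0 then (2 : ℤ) else -1)]
  induction k with
  | zero => simp [sum_range_succ]
  | succ k ih =>
    rw [show 3 * (k + 1) + 2 = 3 * k + 2 + 1 + 1 + 1 by ring, sum_range_succ, sum_range_succ,
      sum_range_succ, ih]
    simp only [show (3 * k + 2) % 3 = 2 by omega, show (3 * k + 2 + 1) % 3 = 0 by omega,
      show (3 * k + 2 + 1 + 1) % 3 = 1 by omega]
    norm_num

lemma closedNbrSum_cycleGraph_periodicPattern_nonneg {m : ℕ} (hm : 3 ≤ m) (hm3 : m % 3 = 2)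
    (a : Fin m) : 0 ≤ closedNbrSum (cycleGraph m) periodicPattern a := by
  obtain ⟨k, rfl⟩ : ∃ k, m = k + 1 := ⟨m - 1, by omega⟩
  have := a.isLt
  rw [closedNbrSum_cycleGraph hm]
  simp only [periodicPattern, Fin.val_add_one, Fin.coe_sub_one, Fin.ext_iff, Fin.val_last,
    Fin.val_zero]
  -- of three cyclically consecutive indices one is `≡ 0 mod 3`, also across the seam
  split_ifs <;> omega

lemma isSRDF_graphJoin_sum_elim {V W : Type*} [Fintype V] [Fintype W] {G : SimpleGraph V}
    {H : SimpleGraph W} {g : V → ℤ} {h : W → ℤ}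
    (hg : ∀ a, g a = -1 ∨ g a = 1 ∨ g a = 2) (hh : ∀ b, h b = -1 ∨ h b = 1 ∨ h b = 2)
    (hgN : ∀ a, 0 ≤ closedNbrSum G g a) (hhN : ∀ b, 0 ≤ closedNbrSum H h b)
    (hgs : 1 ≤ ∑ a, g a) (hhs : 1 ≤ ∑ b, h b)
    (hg2 : ∃ a, g a = 2) (hh2 : ∃ b, h b = 2) :
    IsSRDF (graphJoin G H) (Sum.elim g h) := by
  obtain ⟨a₂, ha₂⟩ := hg2
  obtain ⟨b₂, hb₂⟩ := hh2
  refine ⟨?_, ?_, ?_⟩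
  · rintro (a | b)
    exacts [hg a, hh b]
  · rintro (a | b)
    · rw [closedNbrSum_graphJoin_inl]
      exact le_add_of_nonneg_of_le (hgN a) hhs
    · rw [closedNbrSum_graphJoin_inr]
      exact le_add_of_nonneg_of_le (hhN b) hgs
  · rintro (a | b) _
    exacts [⟨.inr b₂, trivial, hb₂⟩, ⟨.inl a₂, trivial, ha₂⟩]

lemma isSRDF_graphJoin_cycleGraph {m n : ℕ} (hm : 3 ≤ m) (hn : 3 ≤ n) (hm3 : m % 3 = 2)
    (hn3 : n % 3 = 2) :
    IsSRDF (graphJoin (cycleGraph m) (cycleGraph n))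
      (Sum.elim periodicPattern periodicPattern) := by
  have : NeZero m := ⟨by omega⟩
  have : NeZero n := ⟨by omega⟩
  exact isSRDF_graphJoin_sum_elim periodicPattern_cases periodicPattern_cases
    (closedNbrSum_cycleGraph_periodicPattern_nonneg hm hm3)
    (closedNbrSum_cycleGraph_periodicPattern_nonneg hn hn3)
    (sum_periodicPattern hm3).ge (sum_periodicPattern hn3).ge ⟨0, rfl⟩ ⟨0, rfl⟩

theorem stmt6 (m n : ℕ) (hm : 13 ≤ m) (hn : 13 ≤ n)
    (hm3 : m % 3 = 2) (hn3 : n % 3 = 2) :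
    gammaSR (graphJoin (cycleGraph m) (cycleGraph n)) = 2 := by
  refine IsLeast.csInf_eq
    ⟨⟨_, isSRDF_graphJoin_cycleGraph (by omega) (by omega) hm3 hn3, ?_⟩, ?_⟩
  · simp [Fintype.sum_sum_type, sum_periodicPattern hm3, sum_periodicPattern hn3]
  · rintro _ ⟨f, hf, rfl⟩
    exact two_le_sum_of_one_le_closedNbrSum_graphJoin _ _
      (cycleGraph_isRegularOfDegree_two (by omega)) (cycleGraph_isRegularOfDegree_two (by omega))
      (by rw [Fintype.card_fin]; omega) (by rw [Fintype.card_fin]; omega) hf.2.1
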